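/- UTxO transaction commutativity: let h : Tx → B be injective and let n : ℕ. Suppose u, u' : ℕ → Set (OutputRef × O) and t, t' : ℕ → Tx are such that: u 0 = u' 0 and u 0 is well-founded; both (u, t) and (u', t') satisfy the valid-trace conditions for every step k ≤ n (inputs nonempty, inputs contained in the current state, and the update rule); and there exists a permutation σ of Fin (n+1) with t' k = t (σ k) for all k ≤ n. Then the final states agree: u (n+1) = u' (n+1). -/

import Mathlib

/-- Output references spent by a transaction: keys of its inputs. -/
def getORefs {B O Tx : Type*} (inputs : Tx → Set ((B × ℕ) × O)) (t : Tx) :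
    Set (B × ℕ) :=
  {r | ∃ o, (r, o) ∈ inputs t}

/-- UTxO entries created by a transaction: the `i`-th output of `t` keyed by `(h t, i)`. -/
def mkOuts {B O Tx : Type*} (outputs : Tx → List O) (hsh : Tx → B) (t : Tx) :
    Set ((B × ℕ) × O) :=
  {p | ∃ i o, (outputs t)[(i : ℕ)]? = some o ∧ p = ((hsh t, i), o)}

/-- A UTxO set is well-founded if the hash part of each of its keys comes from a
transaction with empty inputs. -/
def WellFoundedUTxO {B O Tx : Type*} (inputs : Tx → Set ((B × ℕ) × O)) (hsh : Tx → B)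
    (u₀ : Set ((B × ℕ) × O)) : Prop :=
  ∀ b n o, ((b, n), o) ∈ u₀ → ∃ t₀ : Tx, hsh t₀ = b ∧ inputs t₀ = ∅

/-- The valid-trace conditions at step `k`: nonempty inputs, inputs present in the
current state, and the UTxO update rule. -/
def ValidStep {B O Tx : Type*} (inputs : Tx → Set ((B × ℕ) × O))
    (outputs : Tx → List O) (hsh : Tx → B)
    (u : ℕ → Set ((B × ℕ) × O)) (t : ℕ → Tx) (k : ℕ) : Prop :=
  inputs (t k) ≠ ∅ ∧ inputs (t k) ⊆ u k ∧
    u (k + 1) = {p | p ∈ u k ∧ p.1 ∉ getORefs inputs (t k)} ∪ mkOuts outputs hsh (t k)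

/-- A valid ledger trace: the valid-trace conditions hold at every step. -/
def ValidLedgerTrace {B O Tx : Type*} (inputs : Tx → Set ((B × ℕ) × O))
    (outputs : Tx → List O) (hsh : Tx → B)
    (u : ℕ → Set ((B × ℕ) × O)) (t : ℕ → Tx) : Prop :=
  ∀ k, ValidStep inputs outputs hsh u t k

/-!
The state reached by a valid trace depends only on the *set* of transactions applied:
`u k` consists of the entries of `u 0` or outputs of `t 0, …, t (k-1)` whose reference is
spent by none of them. This closed form needs that no output is spent at or before the step
creating it. As hashes are injective and every key of `u k` carries the hash of an input-free
transaction or of some earlier `t l`, that amounts to the transactions of a valid trace being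
pairwise distinct. And they are: a repeated transaction would spend an input re-created, after
its first use, by a transaction that also occurred before that first use, an infinite descent.
-/

open Set

def utxoAfter {B O Tx : Type*} (inputs : Tx → Set ((B × ℕ) × O)) (outputs : Tx → List O)
    (hsh : Tx → B) (u₀ : Set ((B × ℕ) × O)) (T : Set Tx) : Set ((B × ℕ) × O) :=
  {p | (p ∈ u₀ ∨ ∃ x ∈ T, p ∈ mkOuts outputs hsh x) ∧ ∀ x ∈ T, p.1 ∉ getORefs inputs x}

section Trace

variable {B O Tx : Type*} {inputs : Tx → Set ((B × ℕ) × O)} {outputs : Tx → List O}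
  {hsh : Tx → B} {u : ℕ → Set ((B × ℕ) × O)} {t : ℕ → Tx}

theorem fst_fst_of_mem_mkOuts {x : Tx} {p : (B × ℕ) × O} (hp : p ∈ mkOuts outputs hsh x) :
    p.1.1 = hsh x := by
  obtain ⟨i, o, -, rfl⟩ := hp
  rfl

theorem utxoAfter_insert {u₀ : Set ((B × ℕ) × O)} {T : Set Tx} {x : Tx}
    (hfresh : ∀ p ∈ mkOuts outputs hsh x, ∀ y ∈ insert x T, p.1 ∉ getORefs inputs y) :
    utxoAfter inputs outputs hsh u₀ (insert x T) =
      {p | p ∈ utxoAfter inputs outputs hsh u₀ T ∧ p.1 ∉ getORefs inputs x} ∪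
        mkOuts outputs hsh x := by
  ext p
  by_cases hp : p ∈ mkOuts outputs hsh x
  · exact iff_of_true ⟨Or.inr ⟨x, mem_insert x T, hp⟩, hfresh p hp⟩ (Or.inr hp)
  · simp only [utxoAfter, mem_insert_iff, exists_eq_or_imp, forall_eq_or_imp, mem_ofPred_eq, hp,
      false_or, mem_union, or_false]
    tauto

theorem exists_mem_mkOuts_of_spent {a b : ℕ} {p : (B × ℕ) × O}
    (hsteps : ∀ j < b, ValidStep inputs outputs hsh u t j) (hab : a < b)
    (hspent : p.1 ∈ getORefs inputs (t a)) (hp : p ∈ u b) :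
    ∃ m, a ≤ m ∧ m < b ∧ p ∈ mkOuts outputs hsh (t m) := by
  induction b with
  | zero => omega
  | succ b ih =>
    rw [(hsteps b b.lt_succ_self).2.2] at hp
    rcases hp with ⟨hp, hunspent⟩ | hp
    · have hab : a < b :=
        lt_of_le_of_ne (Nat.lt_succ_iff.mp hab) (by rintro rfl; exact hunspent hspent)
      obtain ⟨m, ham, hmb, hm⟩ := ih (fun j hj => hsteps j (hj.trans b.lt_succ_self)) hab hp
      exact ⟨m, ham, hmb.trans b.lt_succ_self, hm⟩
    · exact ⟨b, Nat.lt_succ_iff.mp hab, b.lt_succ_self, hp⟩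

theorem exists_lt_eq_of_mem_of_hash_eq (hinj : Function.Injective hsh)
    (hwf : WellFoundedUTxO inputs hsh (u 0)) {k : ℕ}
    (hsteps : ∀ j < k, ValidStep inputs outputs hsh u t j) {p : (B × ℕ) × O} (hp : p ∈ u k)
    {x : Tx} (hx : inputs x ≠ ∅) (hpx : p.1.1 = hsh x) : ∃ l < k, t l = x := by
  induction k with
  | zero =>
    obtain ⟨t₀, ht₀, hempty⟩ := hwf p.1.1 p.1.2 p.2 hp
    exact absurd (hinj (ht₀.trans hpx) ▸ hempty) hx
  | succ k ih =>
    rw [(hsteps k k.lt_succ_self).2.2] at hp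
    rcases hp with ⟨hp, -⟩ | hp
    · obtain ⟨l, hl, rfl⟩ := ih (fun j hj => hsteps j (hj.trans k.lt_succ_self)) hp
      exact ⟨l, hl.trans k.lt_succ_self, rfl⟩
    · exact ⟨k, k.lt_succ_self, hinj ((fst_fst_of_mem_mkOuts hp).symm.trans hpx)⟩

theorem trace_ne_of_lt (hinj : Function.Injective hsh) (hwf : WellFoundedUTxO inputs hsh (u 0))
    {k : ℕ} (hsteps : ∀ j < k, ValidStep inputs outputs hsh u t j) {l m : ℕ} (hlm : l < m)
    (hmk : m < k) : t l ≠ t m := by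
  induction m using Nat.strong_induction_on generalizing l with
  | _ m ih =>
  intro heq
  obtain ⟨r, hr⟩ := nonempty_iff_ne_empty.mpr (hsteps m hmk).1
  have hr_l : r ∈ inputs (t l) := heq ▸ hr
  -- `r` is spent at step `l` but present at step `m`, so some `t m'` with `l ≤ m'` re-created it
  obtain ⟨m', hlm', hm'm, hr_out⟩ := exists_mem_mkOuts_of_spent
    (fun j hj => hsteps j (hj.trans hmk)) hlm ⟨r.2, hr_l⟩ ((hsteps m hmk).2.1 hr)
  -- yet `r` was already present at step `l`, so `t m'` also occurs before `l`
  obtain ⟨l', hl'l, heq'⟩ := exists_lt_eq_of_mem_of_hash_eq hinj hwf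
    (fun j hj => hsteps j (by omega)) ((hsteps l (by omega)).2.1 hr_l) (hsteps m' (by omega)).1
    (fst_fst_of_mem_mkOuts hr_out)
  exact ih m' (by omega) (by omega) (by omega) heq'

theorem notMem_getORefs_of_mem_mkOuts (hinj : Function.Injective hsh)
    (hwf : WellFoundedUTxO inputs hsh (u 0)) {k : ℕ}
    (hsteps : ∀ j < k, ValidStep inputs outputs hsh u t j) {j m : ℕ} (hjm : j ≤ m) (hmk : m < k)
    {p : (B × ℕ) × O} (hp : p ∈ mkOuts outputs hsh (t m)) : p.1 ∉ getORefs inputs (t j) := by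
  rintro ⟨o, ho⟩
  have hkey : p.1.1 = hsh (t m) := fst_fst_of_mem_mkOuts hp
  obtain ⟨l, hlj, hl⟩ := exists_lt_eq_of_mem_of_hash_eq hinj hwf
    (fun i hi => hsteps i (by omega)) ((hsteps j (by omega)).2.1 ho) (hsteps m hmk).1 hkey
  exact trace_ne_of_lt hinj hwf hsteps (by omega) hmk hl

theorem eq_utxoAfter_image_Iio (hinj : Function.Injective hsh)
    (hwf : WellFoundedUTxO inputs hsh (u 0)) {k : ℕ}
    (hsteps : ∀ j < k, ValidStep inputs outputs hsh u t j) :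
    u k = utxoAfter inputs outputs hsh (u 0) (t '' Iio k) := by
  induction k with
  | zero => ext p; simp [utxoAfter]
  | succ k ih =>
    have hfresh : ∀ p ∈ mkOuts outputs hsh (t k), ∀ y ∈ t '' Iio (k + 1),
        p.1 ∉ getORefs inputs y := by
      rintro p hp _ ⟨j, hj, rfl⟩
      exact notMem_getORefs_of_mem_mkOuts hinj hwf hsteps (Nat.lt_succ_iff.mp hj)
        k.lt_succ_self hp
    have hIio : Iio (k + 1) = insert k (Iio k) := Order.Iio_succ_eq_insert k
    rw [hIio, image_insert_eq] at hfresh ⊢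
    rw [(hsteps k k.lt_succ_self).2.2, utxoAfter_insert hfresh,
      ih (fun j hj => hsteps j (hj.trans k.lt_succ_self))]

end Trace

theorem image_Iio_eq_of_perm {α : Type*} {m : ℕ} {f g : ℕ → α} (σ : Equiv.Perm (Fin m))
    (h : ∀ k : Fin m, g k = f (σ k)) : g '' Iio m = f '' Iio m := by
  have hg : g ∘ Fin.val = (f ∘ Fin.val) ∘ σ := funext h
  rw [← Fin.range_val, ← range_comp, ← range_comp, hg, σ.surjective.range_comp]

/-- UTxO transaction commutativity: applying two valid sequences of transactions that
are permutations of each other to the same well-founded initial state yields the same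
final state. -/
theorem utxo_transaction_commutativity {B O Tx : Type*}
    (inputs : Tx → Set ((B × ℕ) × O)) (outputs : Tx → List O) (hsh : Tx → B)
    (hinj : Function.Injective hsh) (n : ℕ)
    (u u' : ℕ → Set ((B × ℕ) × O)) (t t' : ℕ → Tx)
    (h0 : u 0 = u' 0) (hwf : WellFoundedUTxO inputs hsh (u 0))
    (hsteps : ∀ k ≤ n, ValidStep inputs outputs hsh u t k)
    (hsteps' : ∀ k ≤ n, ValidStep inputs outputs hsh u' t' k)
    (hperm : ∃ σ : Equiv.Perm (Fin (n + 1)), ∀ k : Fin (n + 1), t' k = t (σ k)) :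
    u (n + 1) = u' (n + 1) := by
  obtain ⟨σ, hσ⟩ := hperm
  have hvalid := fun k hk => hsteps k (Nat.lt_succ_iff.mp hk)
  have hvalid' := fun k hk => hsteps' k (Nat.lt_succ_iff.mp hk)
  rw [eq_utxoAfter_image_Iio hinj hwf hvalid, eq_utxoAfter_image_Iio hinj (h0 ▸ hwf) hvalid', h0,
    image_Iio_eq_of_perm σ hσ]
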